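/- arXiv:1208.5959 — 2 statements merged into one kernel-verified Lean document; each statement's English description precedes it below -/
import Mathlib

section
/- Let $\phi$ be a compactly supported MRA scaling function with $\mathrm{supp}(\phi) = [0,a]$ and associated wavelet $\psi$ with $\mathrm{supp}(\psi) = [0,a]$. If $R \in \mathbb{N}$ and $0 \le k \le (2^R - 1)\lceil a \rceil$, then $\phi_{R,k} = 2^{R/2}\phi(2^R \cdot - k)$ lies in $V_0^{(a)} \oplus W_0^{(a)} \oplus \cdots \oplus W_{R-1}^{(a)}$, where $V_0^{(a)}$ and $W_j^{(a)}$ are the spans of those scaling functions and wavelets whose supports intersect $[0, \lceil a \rceil]$ nontrivially. -/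
/-!
`φ_{R,k}` is supported in `[0, ⌈a⌉]`, and every `Φ l` or `Ψ j l` (`j < R`) outside the finite
family spanning the target space is supported in `(-∞, 0]` or in `[⌈a⌉, ∞)`, hence orthogonal
to `φ_{R,k}`. A vector in the closed span of an orthonormal family that is
orthogonal to all but finitely many of its members lies in the span of those finitely many:
subtracting its projection onto that span leaves a vector of the closed span orthogonal to the
whole family, hence zero.
-/

open Real MeasureTheory
open scoped InnerProductSpace
open Set Function

namespace Submodule

variable {𝕜 E : Type*} [RCLike 𝕜] [NormedAddCommGroup E] [InnerProductSpace 𝕜 E]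

theorem mem_of_mem_topologicalClosure_sup_of_mem_orthogonal {K L : Submodule 𝕜 E}
    [K.HasOrthogonalProjection] (hKL : K ⟂ L) {f : E} (hf : f ∈ (K ⊔ L).topologicalClosure)
    (hfL : f ∈ Lᗮ) : f ∈ K := by
  set g := f - K.starProjection f
  have hg_mem : g ∈ (K ⊔ L).topologicalClosure :=
    sub_mem hf (le_topologicalClosure _ (mem_sup_left (K.starProjection_apply_mem f)))
  have hg_perp : g ∈ (K ⊔ L).topologicalClosureᗮ := by
    rw [orthogonal_closure, ← inf_orthogonal]
    exact ⟨K.sub_starProjection_mem_orthogonal f, sub_mem hfL (hKL (K.starProjection_apply_mem f))⟩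
  have hg : g = 0 := inner_self_eq_zero.1 (inner_right_of_mem_orthogonal hg_mem hg_perp)
  rw [sub_eq_zero.1 hg]
  exact K.starProjection_apply_mem f

end Submodule

theorem Orthonormal.mem_span_image_of_mem_topologicalClosure {ι 𝕜 E : Type*} [RCLike 𝕜]
    [NormedAddCommGroup E] [InnerProductSpace 𝕜 E] {v : ι → E} (hv : Orthonormal 𝕜 v)
    {s t : Set ι} (hts : t ⊆ s) (ht : t.Finite) {f : E}
    (hf : f ∈ (Submodule.span 𝕜 (v '' s)).topologicalClosure)
    (hf_perp : ∀ i ∈ s \ t, ⟪v i, f⟫_𝕜 = 0) : f ∈ Submodule.span 𝕜 (v '' t) := by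
  have : FiniteDimensional 𝕜 (Submodule.span 𝕜 (v '' t)) :=
    FiniteDimensional.span_of_finite 𝕜 (ht.image v)
  refine Submodule.mem_of_mem_topologicalClosure_sup_of_mem_orthogonal
    (L := Submodule.span 𝕜 (v '' (s \ t))) ?_ ?_ ?_
  · refine Submodule.isOrtho_span.2 ?_
    rintro _ ⟨i, hi, rfl⟩ _ ⟨j, hj, rfl⟩
    exact hv.inner_eq_zero (ne_of_mem_of_not_mem hi hj.2)
  · rwa [← Submodule.span_union, ← image_union, union_sdiff_cancel hts]
  · refine (Submodule.isOrtho_span.2 ?_).symm (Submodule.mem_span_singleton_self f)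
    rintro _ ⟨i, hi, rfl⟩ _ rfl
    exact hf_perp i hi

theorem MeasureTheory.L2.inner_eq_zero_of_ae_eq_zero_or {α 𝕜 : Type*} [RCLike 𝕜]
    [MeasurableSpace α] {μ : Measure α} {u v : Lp 𝕜 2 μ}
    (h : ∀ᵐ x ∂μ, u x = 0 ∨ v x = 0) : ⟪u, v⟫_𝕜 = 0 := by
  rw [L2.inner_def]
  refine integral_eq_zero_of_ae ?_
  filter_upwards [h] with x hx
  rcases hx with hx | hx <;> simp [hx]

theorem ae_eq_zero_or_of_support_subset_Icc {M : Type*} [Zero M] {g h : ℝ → M} {a b c d : ℝ}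
    (hg : support g ⊆ Icc a b) (hh : support h ⊆ Icc c d) (hbc : b ≤ c) :
    ∀ᵐ x, g x = 0 ∨ h x = 0 := by
  filter_upwards [Measure.ae_ne volume b] with x hx
  rcases hx.lt_or_gt with hx | hx
  · exact .inr <| notMem_support.1 fun hx' => (hx.trans_le hbc).not_ge (hh hx').1
  · exact .inl <| notMem_support.1 fun hx' => hx.not_ge (hg hx').2

theorem MeasureTheory.L2.inner_eq_zero_of_support_subset_Icc {𝕜 : Type*} [RCLike 𝕜]
    {u v : Lp 𝕜 2 (volume : Measure ℝ)} {g h : ℝ → 𝕜} (hu : u =ᵐ[volume] g)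
    (hv : v =ᵐ[volume] h) {a b c d : ℝ} (hg : support g ⊆ Icc a b) (hh : support h ⊆ Icc c d)
    (hsep : b ≤ c ∨ d ≤ a) : ⟪u, v⟫_𝕜 = 0 := by
  have hgh : ∀ᵐ x, g x = 0 ∨ h x = 0 := by
    rcases hsep with hsep | hsep
    · exact ae_eq_zero_or_of_support_subset_Icc hg hh hsep
    · filter_upwards [ae_eq_zero_or_of_support_subset_Icc hh hg hsep] with x hx using hx.symm
  refine L2.inner_eq_zero_of_ae_eq_zero_or ?_
  filter_upwards [hu, hv, hgh] with x hux hvx hx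
  rwa [hux, hvx]

theorem support_comp_mul_sub_subset_Icc {M : Type*} [Zero M] {g : ℝ → M} {a s t : ℝ}
    (hg : support g ⊆ Icc 0 a) (hs : 0 < s) :
    support (fun x => g (s * x - t)) ⊆ Icc (t / s) ((t + a) / s) := by
  intro x hx
  obtain ⟨h0, ha⟩ := hg hx
  rw [mem_Icc, div_le_iff₀ hs, le_div_iff₀ hs]
  constructor <;> linarith

theorem support_const_mul_comp_mul_sub_subset_Icc {M : Type*} [MulZeroClass M] {φ : ℝ → M}
    {a : ℝ} {m k : ℤ} (hφ : support φ ⊆ Icc 0 a) (ham : a ≤ m) (R : ℕ)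
    (hk : 0 ≤ k ∧ k ≤ (2 ^ R - 1) * m) (c : M) :
    support (fun x => c * φ ((2:ℝ) ^ R * x - k)) ⊆ Icc 0 (m : ℝ) := by
  refine (support_mul_subset_right _ _).trans <|
    (support_comp_mul_sub_subset_Icc hφ (by positivity)).trans (Icc_subset_Icc ?_ ?_)
  · exact div_nonneg (by exact_mod_cast hk.1) (by positivity)
  · rw [div_le_iff₀ (by positivity)]
    have : (k : ℝ) ≤ (2 ^ R - 1) * m := by exact_mod_cast hk.2
    linarith

theorem MeasureTheory.L2.inner_eq_zero_of_support_subset_Icc_div_pow {𝕜 : Type*} [RCLike 𝕜]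
    {u v : Lp 𝕜 2 (volume : Measure ℝ)} {g h : ℝ → 𝕜} {a : ℝ} {m l : ℤ} {j : ℕ}
    (ham : a ≤ m) (hu : u =ᵐ[volume] g) (hg : support g ⊆ Icc (l / 2 ^ j) ((l + a) / 2 ^ j))
    (hv : v =ᵐ[volume] h) (hh : support h ⊆ Icc 0 (m : ℝ)) (hl : l ≤ -m ∨ 2 ^ j * m ≤ l) :
    ⟪u, v⟫_𝕜 = 0 := by
  refine L2.inner_eq_zero_of_support_subset_Icc hu hv hg hh ?_
  have h2j : (0:ℝ) < 2 ^ j := by positivity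
  rcases hl with hl | hl
  · have : (l : ℝ) ≤ -m := by exact_mod_cast hl
    exact .inl <| div_nonpos_of_nonpos_of_nonneg (by linarith) h2j.le
  · have : (2:ℝ) ^ j * m ≤ l := by exact_mod_cast hl
    exact .inr <| (le_div_iff₀ h2j).2 (by linarith)

theorem stmt_9_general (a : ℝ) (φ ψ : ℝ → ℂ)
    (hφsupp : ∀ x : ℝ, x ∉ Set.Icc 0 a → φ x = 0)
    (hψsupp : ∀ x : ℝ, x ∉ Set.Icc 0 a → ψ x = 0)
    (Φ : ℤ → Lp ℂ 2 (volume : Measure ℝ))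
    (Ψ : ℕ → ℤ → Lp ℂ 2 (volume : Measure ℝ))
    (hΦ : ∀ k : ℤ, (Φ k : ℝ → ℂ) =ᵐ[volume] fun x => φ (x - (k : ℝ)))
    (hΨ : ∀ (j : ℕ) (k : ℤ), (Ψ j k : ℝ → ℂ) =ᵐ[volume]
      fun x => (Real.sqrt ((2:ℝ)^j) : ℂ) * ψ ((2:ℝ)^j * x - (k : ℝ)))
    (horth : Orthonormal ℂ (Sum.elim Φ (fun p : ℕ × ℤ => Ψ p.1 p.2)))
    (R : ℕ) (k : ℤ) (hk : 0 ≤ k ∧ k ≤ (2^R - 1) * ⌈a⌉)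
    (f : Lp ℂ 2 (volume : Measure ℝ))
    (hf : (f : ℝ → ℂ) =ᵐ[volume] fun x => (Real.sqrt ((2:ℝ)^R) : ℂ) * φ ((2:ℝ)^R * x - (k : ℝ)))
    (hMRA : f ∈ (Submodule.span ℂ
      (Set.range Φ ∪ ⋃ j ∈ Set.Iio R, Set.range (Ψ j))).topologicalClosure) :
    f ∈ Submodule.span ℂ
      ((Φ '' {l : ℤ | |l| ≤ ⌈a⌉ - 1}) ∪
        ⋃ j ∈ Set.Iio R, Ψ j '' {l : ℤ | -⌈a⌉ + 1 ≤ l ∧ l ≤ 2^j * ⌈a⌉ - 1}) := by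
  set m := ⌈a⌉
  have ham : a ≤ m := Int.le_ceil a
  have hφ : support φ ⊆ Icc 0 a := support_subset_iff'.2 hφsupp
  have hψ : support ψ ⊆ Icc 0 a := support_subset_iff'.2 hψsupp
  have hf_supp := support_const_mul_comp_mul_sub_subset_Icc hφ ham R hk (√((2:ℝ) ^ R) : ℂ)
  let A : Set ℤ := {l | |l| ≤ m - 1}
  let B : ℕ → Set ℤ := fun j => {l | -m + 1 ≤ l ∧ l ≤ 2 ^ j * m - 1}
  -- `s` and `t` index, in the family `Sum.elim Φ _`, the generators of the MRA space and of
  -- `V₀⁽ᵃ⁾ ⊕ W₀⁽ᵃ⁾ ⊕ ⋯ ⊕ W_{R-1}⁽ᵃ⁾`.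
  let s : Set (ℤ ⊕ ℕ × ℤ) := range Sum.inl ∪ ⋃ j ∈ Iio R, range (Sum.inr ∘ Prod.mk j)
  let t : Set (ℤ ⊕ ℕ × ℤ) := Sum.inl '' A ∪ ⋃ j ∈ Iio R, (Sum.inr ∘ Prod.mk j) '' B j
  have hts : t ⊆ s := union_subset_union (image_subset_range _ _)
    (iUnion₂_mono fun _ _ => image_subset_range _ _)
  have ht : t.Finite :=
    (((finite_Icc (-(m - 1)) (m - 1)).subset fun _ => abs_le.1).image _).union <|
      (finite_Iio R).biUnion fun j _ => (finite_Icc _ _).image _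
  have hv_t :
      Sum.elim Φ (fun p : ℕ × ℤ => Ψ p.1 p.2) '' t = Φ '' A ∪ ⋃ j ∈ Iio R, Ψ j '' B j := by
    simp only [t, image_union, image_iUnion₂, image_image]; rfl
  have hv_s :
      Sum.elim Φ (fun p : ℕ × ℤ => Ψ p.1 p.2) '' s = range Φ ∪ ⋃ j ∈ Iio R, range (Ψ j) := by
    simp only [s, image_union, image_iUnion₂, ← range_comp]; rfl
  rw [← hv_t]
  refine horth.mem_span_image_of_mem_topologicalClosure hts ht (hv_s ▸ hMRA) ?_
  rintro (l | ⟨j, l⟩) ⟨hs, hnt⟩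
  · have hl : ¬|l| ≤ m - 1 := fun h => hnt (.inl ⟨l, h, rfl⟩)
    -- `Φ l` is supported like a wavelet of level `0`.
    refine L2.inner_eq_zero_of_support_subset_Icc_div_pow (j := 0) ham (hΦ l)
      (by simpa using support_comp_mul_sub_subset_Icc hφ one_pos (t := l)) hf hf_supp ?_
    rw [abs_le] at hl
    omega
  · have hj : j < R := by simpa [s] using hs
    have hl : ¬(-m + 1 ≤ l ∧ l ≤ 2 ^ j * m - 1) := fun h =>
      hnt (.inr (mem_biUnion hj ⟨l, h, rfl⟩))
    refine L2.inner_eq_zero_of_support_subset_Icc_div_pow ham (hΨ j l)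
      ((support_mul_subset_right _ _).trans (support_comp_mul_sub_subset_Icc hψ (by positivity)))
      hf hf_supp ?_
    omega

/-- If `0 ≤ k ≤ (2^R - 1)⌈a⌉`, the fine-scale scaling function `φ_{R,k}` lies in the
finite-dimensional space `V₀⁽ᵃ⁾ ⊕ W₀⁽ᵃ⁾ ⊕ ⋯ ⊕ W_{R-1}⁽ᵃ⁾` spanned by those coarse
scaling functions and wavelets whose supports meet `[0, ⌈a⌉]`. -/
theorem stmt_9 (a : ℝ) (ha : 1 ≤ a) (φ ψ : ℝ → ℂ)
    (hφsupp : ∀ x : ℝ, x ∉ Set.Icc 0 a → φ x = 0)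
    (hψsupp : ∀ x : ℝ, x ∉ Set.Icc 0 a → ψ x = 0)
    (Φ : ℤ → Lp ℂ 2 (volume : Measure ℝ))
    (Ψ : ℕ → ℤ → Lp ℂ 2 (volume : Measure ℝ))
    (hΦ : ∀ k : ℤ, (Φ k : ℝ → ℂ) =ᵐ[volume] fun x => φ (x - (k : ℝ)))
    (hΨ : ∀ (j : ℕ) (k : ℤ), (Ψ j k : ℝ → ℂ) =ᵐ[volume]
      fun x => (Real.sqrt ((2:ℝ)^j) : ℂ) * ψ ((2:ℝ)^j * x - (k : ℝ)))
    (horth : Orthonormal ℂ (Sum.elim Φ (fun p : ℕ × ℤ => Ψ p.1 p.2)))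
    (R : ℕ) (k : ℤ) (hk : 0 ≤ k ∧ k ≤ (2^R - 1) * ⌈a⌉)
    (f : Lp ℂ 2 (volume : Measure ℝ))
    (hf : (f : ℝ → ℂ) =ᵐ[volume] fun x => (Real.sqrt ((2:ℝ)^R) : ℂ) * φ ((2:ℝ)^R * x - (k : ℝ)))
    (hMRA : f ∈ (Submodule.span ℂ
      (Set.range Φ ∪ ⋃ j ∈ Set.Iio R, Set.range (Ψ j))).topologicalClosure) :
    f ∈ Submodule.span ℂ
      ((Φ '' {l : ℤ | |l| ≤ ⌈a⌉ - 1}) ∪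
        ⋃ j ∈ Set.Iio R, Ψ j '' {l : ℤ | -⌈a⌉ + 1 ≤ l ∧ l ≤ 2^j * ⌈a⌉ - 1}) :=
  stmt_9_general a φ ψ hφsupp hψsupp Φ Ψ hΦ hΨ horth R k hk f hf hMRA
end

section
/- Fix $M_1 \in \mathbb{N}$, $\epsilon_1, \epsilon_2 > 0$ and $C > 1$, and let $M_2 = \lceil C M_1 \epsilon_1/\epsilon_2 \rceil$. Then $\sum_{l > M_2/2} \; \frac{2 \epsilon_1 \epsilon_2 M_1}{\pi^2 |\epsilon_1 M_1/2 - \epsilon_2 l|^2} \le \frac{4}{\pi^2 (C-1)}$. -/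
/-!
With `b = ε₁ M₁ / (2 ε₂)` the summand is `(4 b / π²) (l - b)⁻²`, and every admissible `l` is
at least an integer `m` with `m - 1/2 ≥ M₂ / 2 ≥ C b`. Since
`x⁻² ≤ (x - 1/2)⁻¹ - (x + 1/2)⁻¹` for `x > 1/2`, the tail telescopes and is at most
`(4 b / π²) (m - 1/2 - b)⁻¹ ≤ (4 b / π²) ((C - 1) b)⁻¹ = 4 / (π² (C - 1))`.
-/

open Real

open Finset in
theorem Finset.sum_Ico_int_sub_succ {M : Type*} [AddCommGroup M] (g : ℤ → M) {m n : ℤ}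
    (hmn : m ≤ n) : ∑ l ∈ Ico m n, (g l - g (l + 1)) = g m - g n := by
  induction n, hmn using Int.leInduction with
  | base => simp
  | succ n hmn ih =>
    rw [← insert_Ico_right_eq_Ico_add_one hmn, sum_insert right_notMem_Ico, ih]
    abel

open Finset in
theorem tsum_subtype_le_of_le_sub_succ {p : ℤ → Prop} {m : ℤ} (hp : ∀ l, p l → m ≤ l)
    {f g : ℤ → ℝ} (hf₀ : ∀ l, m ≤ l → 0 ≤ f l) (hfg : ∀ l, m ≤ l → f l ≤ g l - g (l + 1))
    (hg₀ : ∀ l, m ≤ l → 0 ≤ g l) :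
    ∑' l : {l // p l}, f l ≤ g m := by
  classical
  refine tsum_le_of_sum_le' (hg₀ m le_rfl) fun s => ?_
  obtain ⟨N, hN⟩ := (s.image Subtype.val).bddAbove
  set n := max m (N + 1)
  have hmn : m ≤ n := le_max_left _ _
  have hsub : s.image Subtype.val ⊆ Ico m n := fun l hl => by
    obtain ⟨⟨l, hpl⟩, -, rfl⟩ := mem_image.1 hl
    exact mem_Ico.2 ⟨hp l hpl, (Int.lt_add_one_of_le (hN hl)).trans_le (le_max_right _ _)⟩
  calc ∑ l ∈ s, f l = ∑ l ∈ s.image Subtype.val, f l :=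
        (sum_image fun _ _ _ _ => Subtype.ext).symm
    _ ≤ ∑ l ∈ Ico m n, f l :=
        sum_le_sum_of_subset_of_nonneg hsub fun l hl _ => hf₀ l (mem_Ico.1 hl).1
    _ ≤ ∑ l ∈ Ico m n, (g l - g (l + 1)) := sum_le_sum fun l hl => hfg l (mem_Ico.1 hl).1
    _ = g m - g n := sum_Ico_int_sub_succ g hmn
    _ ≤ g m := sub_le_self _ (hg₀ n hmn)

theorem inv_sq_le_inv_sub_half_sub_inv_add_half {x : ℝ} (hx : 1 / 2 < x) :
    (x ^ 2)⁻¹ ≤ (x - 1 / 2)⁻¹ - (x + 1 / 2)⁻¹ := by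
  have h₁ : x - 1 / 2 ≠ 0 := by linarith
  have h₂ : x + 1 / 2 ≠ 0 := by linarith
  calc (x ^ 2)⁻¹ ≤ (x ^ 2 - 1 / 4)⁻¹ := by gcongr <;> nlinarith
    _ = (x - 1 / 2)⁻¹ - (x + 1 / 2)⁻¹ := by rw [inv_sub_inv h₁ h₂]; ring

theorem tsum_inv_sq_sub_le {p : ℤ → Prop} {m : ℤ} (hp : ∀ l, p l → m ≤ l) {b : ℝ}
    (hbm : b + 1 / 2 < m) :
    ∑' l : {l // p l}, (((l : ℝ) - b) ^ 2)⁻¹ ≤ ((m : ℝ) - 1 / 2 - b)⁻¹ := by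
  have hpos : ∀ l : ℤ, m ≤ l → 1 / 2 < (l : ℝ) - b := fun l hl => by
    have : (m : ℝ) ≤ l := by exact_mod_cast hl
    linarith
  refine tsum_subtype_le_of_le_sub_succ (f := fun l : ℤ => (((l : ℝ) - b) ^ 2)⁻¹)
    (g := fun l : ℤ => ((l : ℝ) - 1 / 2 - b)⁻¹) hp (fun l _ => by positivity) (fun l hl => ?_)
    (fun l hl => (inv_pos.2 (by linarith [hpos l hl])).le)
  convert inv_sq_le_inv_sub_half_sub_inv_add_half (hpos l hl) using 3 <;> push_cast <;> ring

theorem mul_div_sq_abs_sub_eq (a ε₁ ε₂ x : ℝ) (hε₂ : ε₂ ≠ 0) :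
    2 * ε₁ * ε₂ * a / (π ^ 2 * |ε₁ * a / 2 - ε₂ * x| ^ 2)
      = 4 * (ε₁ * a / (2 * ε₂)) / π ^ 2 * ((x - ε₁ * a / (2 * ε₂)) ^ 2)⁻¹ := by
  have hdiff : ε₁ * a / 2 - ε₂ * x = -(ε₂ * (x - ε₁ * a / (2 * ε₂))) := by field_simp; ring
  rw [hdiff, sq_abs, neg_sq, mul_pow, div_eq_mul_inv, mul_inv, mul_inv]
  field_simp
  ring

theorem Int.ediv_two_add_one_le_iff {M l : ℤ} : M / 2 + 1 ≤ l ↔ (M : ℝ) / 2 < l := by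
  rw [div_lt_iff₀ two_pos]
  norm_cast
  omega

theorem Int.half_add_half_le_of_half_lt {M l : ℤ} (h : (M : ℝ) / 2 < l) :
    (M : ℝ) / 2 + 1 / 2 ≤ l := by
  rw [div_lt_iff₀ two_pos] at h
  have : (M : ℝ) + 1 ≤ l * 2 := by exact_mod_cast (show M < l * 2 by exact_mod_cast h)
  linarith

/-- Tail estimate controlling the energy leakage between truncated Fourier sampling
spaces of different densities. -/
theorem stmt_14 (M₁ : ℕ) (ε₁ ε₂ C : ℝ) (hε₁ : 0 < ε₁) (hε₂ : 0 < ε₂) (hC : 1 < C)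
    (M₂ : ℤ) (hM₂ : M₂ = ⌈C * M₁ * ε₁ / ε₂⌉) :
    ∑' l : {l : ℤ // (M₂ : ℝ) / 2 < (l : ℝ)},
        2 * ε₁ * ε₂ * M₁ / (π^2 * |ε₁ * M₁ / 2 - ε₂ * ((l : ℤ) : ℝ)|^2)
      ≤ 4 / (π^2 * (C - 1)) := by
  rcases M₁.eq_zero_or_pos with rfl | hM₁
  · simp only [Nat.cast_zero, mul_zero, zero_div, tsum_zero]
    have : 0 < C - 1 := by linarith
    positivity
  set b : ℝ := ε₁ * M₁ / (2 * ε₂) with hb_def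
  have hb : 0 < b := by positivity
  have hbM₂ : C * b ≤ (M₂ : ℝ) / 2 := by
    have : C * M₁ * ε₁ / ε₂ = 2 * (C * b) := by rw [hb_def]; field_simp
    linarith [hM₂ ▸ Int.le_ceil (C * M₁ * ε₁ / ε₂)]
  set m : ℤ := M₂ / 2 + 1
  have hm : (M₂ : ℝ) / 2 + 1 / 2 ≤ m :=
    Int.half_add_half_le_of_half_lt (Int.ediv_two_add_one_le_iff.1 le_rfl)
  have hCb : 0 < (C - 1) * b := mul_pos (by linarith) hb
  calc _ = ∑' l : {l : ℤ // (M₂ : ℝ) / 2 < (l : ℝ)}, 4 * b / π ^ 2 * (((l : ℝ) - b) ^ 2)⁻¹ :=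
        tsum_congr fun l => mul_div_sq_abs_sub_eq _ _ _ _ hε₂.ne'
    _ = 4 * b / π ^ 2 * ∑' l : {l : ℤ // (M₂ : ℝ) / 2 < (l : ℝ)}, (((l : ℝ) - b) ^ 2)⁻¹ :=
        tsum_mul_left
    _ ≤ 4 * b / π ^ 2 * ((m : ℝ) - 1 / 2 - b)⁻¹ := by
        gcongr
        exact tsum_inv_sq_sub_le (fun l => Int.ediv_two_add_one_le_iff.2) (by linarith)
    _ ≤ 4 * b / π ^ 2 * ((C - 1) * b)⁻¹ := by gcongr; linarith
    _ = 4 / (π ^ 2 * (C - 1)) := by field_simp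
end
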